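/- Every regular curve γ : I → ℝ⁴ parametrized by arc length whose image is contained in an affine hyperplane of ℝ⁴ admits a generalized Bishop frame of type C. -/

import Mathlib

noncomputable section

open Set

abbrev E4 : Type := EuclideanSpace ℝ (Fin 4)
abbrev Mat4 : Type := Matrix (Fin 4) (Fin 4) ℝ

/-- A matrix-valued map is smooth on `I` (entrywise). -/
def SmoothMat (I : Set ℝ) (Z : ℝ → Mat4) : Prop :=
  ∀ i j, ContDiffOn ℝ (⊤ : ℕ∞) (fun s => Z s i j) I

/-- `Z' = X · Z` on `I`, derivatives taken entrywise. -/
def MatDerivEq (I : Set ℝ) (Z X : ℝ → Mat4) : Prop :=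
  ∀ s ∈ I, ∀ i j, deriv (fun t => Z t i j) s = (X s * Z s) i j

/-- A regular curve parametrized by arc length on `I`. -/
def IsRegularCurve (I : Set ℝ) (γ : ℝ → E4) : Prop :=
  ContDiffOn ℝ (⊤ : ℕ∞) γ I ∧ ∀ s ∈ I, ‖deriv γ s‖ = 1

def IsTwoRegularCurve (I : Set ℝ) (γ : ℝ → E4) : Prop :=
  IsRegularCurve I γ ∧ ∀ s ∈ I, deriv (deriv γ) s ≠ 0

/-- An orthonormal frame on `γ`: smooth, orthogonal, first row the tangent vector. -/
def IsFrameOn (I : Set ℝ) (γ : ℝ → E4) (Z : ℝ → Mat4) : Prop :=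
  SmoothMat I Z ∧ (∀ s ∈ I, Z s ∈ Matrix.orthogonalGroup (Fin 4) ℝ) ∧
    ∀ s ∈ I, ∀ i, Z s 0 i = deriv γ s i

def ShapeB (X : Mat4) : Prop := X 1 2 = 0 ∧ X 1 3 = 0 ∧ X 2 3 = 0
def ShapeC (X : Mat4) : Prop := X 0 3 = 0 ∧ X 1 2 = 0 ∧ X 2 3 = 0
def ShapeD (X : Mat4) : Prop := X 0 2 = 0 ∧ X 0 3 = 0 ∧ X 2 3 = 0
def ShapeF (X : Mat4) : Prop := X 0 2 = 0 ∧ X 0 3 = 0 ∧ X 1 3 = 0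

/-- `γ` admits a generalized Bishop frame whose coefficient matrix has the given shape. -/
def AdmitsFrame (Shape : Mat4 → Prop) (I : Set ℝ) (γ : ℝ → E4) : Prop :=
  ∃ Z X : ℝ → Mat4, IsFrameOn I γ Z ∧ MatDerivEq I Z X ∧ ∀ s ∈ I, Shape (X s)

namespace BishopAux

open scoped InnerProductSpace ContDiff

/-- real clamp to `[-M, M]` -/
def clR (M x : ℝ) : ℝ := max (-M) (min M x)

lemma clR_abs_le {M : ℝ} (hM : 0 ≤ M) (x : ℝ) : |clR M x| ≤ M := by
  rw [abs_le]
  constructor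
  · exact le_max_left _ _
  · exact max_le (by linarith) (min_le_left _ _)

lemma clR_abs_le_abs {M : ℝ} (hM : 0 ≤ M) (x : ℝ) : |clR M x| ≤ |x| := by
  rw [abs_le]
  refine ⟨le_trans ?_ (le_max_right _ _),
    max_le (by linarith [abs_nonneg x]) ((min_le_right _ _).trans (le_abs_self x))⟩
  exact le_min (by linarith [abs_nonneg x]) (neg_abs_le x)

lemma clR_eq {M x : ℝ} (h : |x| ≤ M) : clR M x = x := by
  rw [abs_le] at h
  rw [clR, min_eq_right h.2, max_eq_right h.1]

lemma clR_lip (M x y : ℝ) : |clR M x - clR M y| ≤ |x - y| := by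
  have h1 : |max (min M x) (-M) - max (min M y) (-M)| ≤ |min M x - min M y| :=
    abs_max_sub_max_le_abs _ _ _
  have h2 : |min M x - min M y| ≤ max |M - M| |x - y| := abs_min_sub_min_le_max M x M y
  rw [clR, clR, max_comm (-M) _, max_comm (-M) _]
  refine h1.trans (h2.trans ?_)
  simp

/-- componentwise clamp on `E4` -/
def clE (M : ℝ) (x : E4) : E4 := (WithLp.equiv 2 _).symm (fun i => clR M (x i))

lemma clE_apply (M : ℝ) (x : E4) (i : Fin 4) : clE M x i = clR M (x i) := rfl

lemma norm_le_of_abs_le {x y : E4} (h : ∀ i, |x i| ≤ |y i|) : ‖x‖ ≤ ‖y‖ := by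
  rw [EuclideanSpace.norm_eq, EuclideanSpace.norm_eq]
  apply Real.sqrt_le_sqrt
  apply Finset.sum_le_sum
  intro i _
  have := h i
  rw [Real.norm_eq_abs, Real.norm_eq_abs]
  exact pow_le_pow_left₀ (abs_nonneg _) this 2

lemma abs_coord_le_norm (x : E4) (i : Fin 4) : |x i| ≤ ‖x‖ := by
  rw [EuclideanSpace.norm_eq]
  have h1 : |x i| = Real.sqrt (‖x i‖ ^ 2) := by
    rw [Real.norm_eq_abs, Real.sqrt_sq_eq_abs, abs_abs]
  rw [h1]
  apply Real.sqrt_le_sqrt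
  exact Finset.single_le_sum (f := fun j => ‖x j‖ ^ 2) (fun j _ => by positivity)
    (Finset.mem_univ i)

lemma clE_lipschitz (M : ℝ) : LipschitzWith 1 (clE M) := by
  apply LipschitzWith.of_dist_le_mul
  intro x y
  rw [NNReal.coe_one, one_mul, EuclideanSpace.dist_eq, EuclideanSpace.dist_eq]
  apply Real.sqrt_le_sqrt
  apply Finset.sum_le_sum
  intro i _
  rw [Real.dist_eq, Real.dist_eq]
  exact pow_le_pow_left₀ (abs_nonneg _) (clR_lip M (x i) (y i)) 2

lemma clE_norm_le_norm {M : ℝ} (hM : 0 ≤ M) (x : E4) : ‖clE M x‖ ≤ ‖x‖ :=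
  norm_le_of_abs_le fun i => by rw [clE_apply]; exact clR_abs_le_abs hM (x i)

lemma clE_norm_le {M : ℝ} (hM : 0 ≤ M) (x : E4) : ‖clE M x‖ ≤ 2 * M := by
  rw [EuclideanSpace.norm_eq]
  have h : ∑ i : Fin 4, ‖clE M x i‖ ^ 2 ≤ ∑ _i : Fin 4, M ^ 2 := by
    apply Finset.sum_le_sum
    intro i _
    rw [Real.norm_eq_abs]
    exact pow_le_pow_left₀ (abs_nonneg _) (clR_abs_le hM (x i)) 2
  refine (Real.sqrt_le_sqrt h).trans ?_
  have : ∑ _i : Fin 4, M ^ 2 = (2 * M) ^ 2 := by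
    simp [Finset.sum_const]
    ring
  rw [this, Real.sqrt_sq (by linarith)]

lemma clE_eq {M : ℝ} {x : E4} (h : ‖x‖ ≤ M) : clE M x = x := by
  have : ∀ i, clE M x i = x i := by
    intro i
    rw [clE_apply]
    exact clR_eq ((abs_coord_le_norm x i).trans h)
  ext i
  exact this i


/-- Global existence of solutions for a linear ODE on a compact interval. -/
lemma exists_sol_Icc (B : ℝ → E4 →L[ℝ] E4) {a b t₀ : ℝ} (hab : a ≤ b) (ht₀ : t₀ ∈ Icc a b)
    (hB : ContinuousOn B (Icc a b)) (y₀ : E4) :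
    ∃ f : ℝ → E4, f t₀ = y₀ ∧ ContinuousOn f (Icc a b) ∧
      ∀ t ∈ Icc a b, HasDerivWithinAt f (B t (f t)) (Icc a b) t := by
  obtain ⟨C₀, hC₀⟩ := isCompact_Icc.exists_bound_of_continuousOn hB
  set L : ℝ := max C₀ 0 with hLdef
  have hL0 : 0 ≤ L := le_max_right _ _
  have hLb : ∀ t ∈ Icc a b, ‖B t‖ ≤ L := fun t ht => (hC₀ t ht).trans (le_max_left _ _)
  set M : ℝ := (‖y₀‖ + 1) * Real.exp (L * (b - a)) with hMdef
  have hexp1 : 1 ≤ Real.exp (L * (b - a)) := by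
    rw [Real.one_le_exp_iff]
    have : 0 ≤ b - a := by linarith
    positivity
  have hM1 : 1 ≤ M := by
    have h0 : (1 : ℝ) ≤ ‖y₀‖ + 1 := by linarith [norm_nonneg y₀]
    calc (1:ℝ) = 1 * 1 := by ring
    _ ≤ (‖y₀‖ + 1) * Real.exp (L * (b - a)) := by
        apply mul_le_mul h0 hexp1 zero_le_one (by linarith)
  have hM0 : 0 ≤ M := by linarith
  set v : ℝ → E4 → E4 := fun t x => B t (clE M x) with hvdef
  set C : ℝ := L * (2 * M) with hCdef
  have hC0 : 0 ≤ C := by positivity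
  set R : ℝ := C * (b - a) with hRdef
  have hnorm_v : ∀ t ∈ Icc a b, ∀ x : E4, ‖v t x‖ ≤ L * ‖clE M x‖ := by
    intro t ht x
    calc ‖B t (clE M x)‖ ≤ ‖B t‖ * ‖clE M x‖ := (B t).le_opNorm _
    _ ≤ L * ‖clE M x‖ := by
        apply mul_le_mul_of_nonneg_right (hLb t ht) (norm_nonneg _)
  have hlipv : ∀ t ∈ Icc a b, LipschitzWith L.toNNReal (v t) := by
    intro t ht
    have h1 : LipschitzWith (L.toNNReal * 1) (fun x => B t (clE M x)) := by
      apply LipschitzWith.comp _ (clE_lipschitz M)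
      apply (B t).lipschitz.weaken
      rw [← NNReal.coe_le_coe, coe_nnnorm, Real.coe_toNNReal _ hL0]
      exact hLb t ht
    simpa using h1
  have hnle : ∀ t ∈ Icc a b, ∀ x : E4, ‖v t x‖ ≤ C := by
    intro t ht x
    refine (hnorm_v t ht x).trans ?_
    rw [hCdef]
    exact mul_le_mul_of_nonneg_left (clE_norm_le hM0 x) hL0
  have hCmul : C * max (b - t₀) (t₀ - a) ≤ R := by
    rw [hRdef]
    apply mul_le_mul_of_nonneg_left _ hC0
    apply max_le
    · linarith [ht₀.1]
    · linarith [ht₀.2]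
  have hR0 : 0 ≤ R := mul_nonneg hC0 (by linarith)
  have hpl : IsPicardLindelof v (⟨t₀, ht₀⟩ : Icc a b) y₀ R.toNNReal 0 C.toNNReal L.toNNReal :=
    { lipschitzOnWith := fun t ht => (hlipv t ht).lipschitzOnWith
      continuousOn := fun x _ => hB.clm_apply continuousOn_const
      norm_le := fun t ht x _ => (hnle t ht x).trans (by rw [Real.coe_toNNReal _ hC0])
      mul_max_le := by
        rw [Real.coe_toNNReal _ hC0, Real.coe_toNNReal _ hR0, NNReal.coe_zero, sub_zero]
        exact hCmul }
  obtain ⟨f, hf0', hf⟩ := hpl.exists_eq_forall_mem_Icc_hasDerivWithinAt₀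
  have hf0 : f t₀ = y₀ := hf0'
  have hcont : ContinuousOn f (Icc a b) := fun t ht => (hf t ht).continuousWithinAt
  -- a priori bound via Gronwall
  have hgb : ∀ δ : ℝ, 0 ≤ δ → ∀ x : ℝ, x ∈ Icc (0:ℝ) (b - a) →
      gronwallBound δ L 0 x ≤ δ * Real.exp (L * (b - a)) := by
    intro δ hδ x hx
    rw [gronwallBound_ε0]
    apply mul_le_mul_of_nonneg_left _ hδ
    exact Real.exp_le_exp.2 (by nlinarith [hx.1, hx.2])
  have keyR : ∀ t ∈ Icc t₀ b, ‖f t‖ ≤ M := by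
    intro t ht
    have hmono : Icc t₀ b ⊆ Icc a b := Icc_subset_Icc ht₀.1 le_rfl
    have hder : ∀ x ∈ Ico t₀ b, HasDerivWithinAt f (v x (f x)) (Ici x) x := by
      intro x hx
      have hxab : x ∈ Icc a b := ⟨le_trans ht₀.1 hx.1, le_of_lt hx.2⟩
      refine (hf x hxab).mono_of_mem_nhdsWithin ?_
      rw [mem_nhdsWithin]
      exact ⟨Iio b, isOpen_Iio, hx.2, fun y hy => ⟨le_trans ht₀.1 (le_trans hx.1 hy.2),
        le_of_lt hy.1⟩⟩
    have hbnd : ∀ x ∈ Ico t₀ b, ‖v x (f x)‖ ≤ L * ‖f x‖ + 0 := by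
      intro x hx
      have hxab : x ∈ Icc a b := ⟨le_trans ht₀.1 hx.1, le_of_lt hx.2⟩
      rw [add_zero]
      exact (hnorm_v x hxab (f x)).trans
        (mul_le_mul_of_nonneg_left (clE_norm_le_norm hM0 (f x)) hL0)
    have hG := norm_le_gronwallBound_of_norm_deriv_right_le (f := f)
      (f' := fun t => v t (f t)) (δ := ‖y₀‖) (K := L) (ε := 0) (a := t₀) (b := b)
      (hcont.mono hmono) hder (le_of_eq (by rw [hf0])) hbnd t ht
    refine hG.trans ?_
    have h1 : ‖y₀‖ * Real.exp (L * (b - a)) ≤ M := by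
      rw [hMdef]
      apply mul_le_mul_of_nonneg_right (by linarith) (by positivity)
    refine le_trans (hgb ‖y₀‖ (norm_nonneg _) (t - t₀) ⟨by linarith [ht.1], by
      linarith [ht.2, ht₀.1]⟩) h1
  have keyL : ∀ t ∈ Icc a t₀, ‖f t‖ ≤ M := by
    intro t ht
    -- reversed function
    set g : ℝ → E4 := fun x => f (a + t₀ - x) with hgdef
    have hmaps : ∀ x ∈ Icc a t₀, a + t₀ - x ∈ Icc a t₀ := by
      intro x hx
      constructor <;> [linarith [hx.2]; linarith [hx.1]]
    have hsub : Icc a t₀ ⊆ Icc a b := Icc_subset_Icc le_rfl ht₀.2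
    have hgc : ContinuousOn g (Icc a t₀) := by
      apply (hcont.mono hsub).comp ((continuous_const.sub continuous_id).continuousOn)
      intro x hx
      exact hmaps x hx
    have hg' : ∀ x ∈ Ico a t₀, HasDerivWithinAt g
        ((-1 : ℝ) • v (a + t₀ - x) (f (a + t₀ - x))) (Ici x) x := by
      intro x hx
      have hσx : a + t₀ - x ∈ Icc a t₀ := hmaps x ⟨hx.1, le_of_lt hx.2⟩
      have hfd : HasDerivWithinAt f (v (a + t₀ - x) (f (a + t₀ - x))) (Icc a b) (a + t₀ - x) :=
        hf _ (hsub hσx)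
      have hσ : HasDerivWithinAt (fun y : ℝ => a + t₀ - y) (-1 : ℝ) (Icc x t₀) x := by
        simpa using ((hasDerivAt_id' x).const_sub (a + t₀)).hasDerivWithinAt
          (s := Icc x t₀)
      have hmaps2 : MapsTo (fun y : ℝ => a + t₀ - y) (Icc x t₀) (Icc a b) := by
        intro y hy
        rw [mem_Icc] at hy
        show a + t₀ - y ∈ Icc a b
        apply hsub
        rw [mem_Icc]
        constructor
        · linarith [hy.2]
        · linarith [hy.1, hx.1]
      have hcomp := hfd.scomp x hσ hmaps2
      refine hcomp.mono_of_mem_nhdsWithin ?_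
      rw [mem_nhdsWithin]
      exact ⟨Iio t₀, isOpen_Iio, hx.2, fun y hy => ⟨hy.2, le_of_lt hy.1⟩⟩
    have hga : ‖g a‖ ≤ ‖y₀‖ := by
      rw [hgdef]
      simp only [add_sub_cancel_left]
      rw [hf0]
    have hbound : ∀ x ∈ Ico a t₀, ‖(-1 : ℝ) • v (a + t₀ - x) (f (a + t₀ - x))‖ ≤
        L * ‖g x‖ + 0 := by
      intro x hx
      rw [norm_smul, add_zero]
      have hσx : a + t₀ - x ∈ Icc a b := hsub (hmaps x ⟨hx.1, le_of_lt hx.2⟩)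
      have := (hnorm_v _ hσx (f (a + t₀ - x))).trans
        (mul_le_mul_of_nonneg_left (clE_norm_le_norm hM0 (f (a + t₀ - x))) hL0)
      simpa using this
    have hG := norm_le_gronwallBound_of_norm_deriv_right_le hgc hg' hga hbound
    -- apply at x := a + t₀ - t
    have hx : a + t₀ - t ∈ Icc a t₀ := hmaps t ht
    have h2 := hG (a + t₀ - t) hx
    have h3 : g (a + t₀ - t) = f t := by rw [hgdef]; norm_num
    rw [h3] at h2
    refine h2.trans ?_
    refine le_trans (hgb ‖y₀‖ (norm_nonneg _) _ ⟨by linarith [hx.1], by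
      linarith [hx.2, ht₀.2, ht.1]⟩) ?_
    rw [hMdef]
    apply mul_le_mul_of_nonneg_right (by linarith) (by positivity)
  have key : ∀ t ∈ Icc a b, ‖f t‖ ≤ M := by
    intro t ht
    rcases le_total t t₀ with h | h
    · exact keyL t ⟨ht.1, h⟩
    · exact keyR t ⟨h, ht.2⟩
  refine ⟨f, hf0, hcont, fun t ht => ?_⟩
  have h1 := hf t ht
  have h2 : clE M (f t) = f t := clE_eq (key t ht)
  rw [hvdef] at h1
  simp only [h2] at h1
  exact h1


/-- Global existence of solutions for a linear ODE on an open order-connected set. -/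
lemma exists_sol_global (I : Set ℝ) (hIopen : IsOpen I) (hIconn : I.OrdConnected)
    {s₀ : ℝ} (hs₀ : s₀ ∈ I) (B : ℝ → E4 →L[ℝ] E4) (hB : ContinuousOn B I) (y₀ : E4) :
    ∃ y : ℝ → E4, y s₀ = y₀ ∧ ∀ s ∈ I, HasDerivAt y (B s (y s)) s := by
  classical
  have hP : ∀ s ∈ I, ∃ p : ℝ × ℝ × (ℝ → E4), p.1 < min s₀ s ∧ max s₀ s < p.2.1 ∧
      Icc p.1 p.2.1 ⊆ I ∧ p.2.2 s₀ = y₀ ∧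
      ∀ t ∈ Icc p.1 p.2.1, HasDerivWithinAt p.2.2 (B t (p.2.2 t)) (Icc p.1 p.2.1) t := by
    intro s hs
    obtain ⟨ε₁, hε₁, hb₁⟩ := Metric.isOpen_iff.1 hIopen s hs
    obtain ⟨ε₂, hε₂, hb₂⟩ := Metric.isOpen_iff.1 hIopen s₀ hs₀
    set ε : ℝ := min ε₁ ε₂ / 2 with hεdef
    have hε : 0 < ε := by positivity
    have hεlt₁ : ε < ε₁ := by
      have : min ε₁ ε₂ ≤ ε₁ := min_le_left _ _
      rw [hεdef]; linarith [lt_min hε₁ hε₂]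
    have hεlt₂ : ε < ε₂ := by
      have : min ε₁ ε₂ ≤ ε₂ := min_le_right _ _
      rw [hεdef]; linarith [lt_min hε₁ hε₂]
    set a : ℝ := min s₀ s - ε with hadef
    set b : ℝ := max s₀ s + ε with hbdef
    have haI : a ∈ I := by
      rcases le_total s₀ s with h | h
      · apply hb₂
        rw [Metric.mem_ball, Real.dist_eq, hadef, min_eq_left h]
        rw [abs_of_nonpos (by linarith)]
        linarith
      · apply hb₁
        rw [Metric.mem_ball, Real.dist_eq, hadef, min_eq_right h]
        rw [abs_of_nonpos (by linarith)]
        linarith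
    have hbI : b ∈ I := by
      rcases le_total s₀ s with h | h
      · apply hb₁
        rw [Metric.mem_ball, Real.dist_eq, hbdef, max_eq_right h]
        rw [abs_of_nonneg (by linarith)]
        linarith
      · apply hb₂
        rw [Metric.mem_ball, Real.dist_eq, hbdef, max_eq_left h]
        rw [abs_of_nonneg (by linarith)]
        linarith
    have hsub : Icc a b ⊆ I := hIconn.out haI hbI
    have hminmax : min s₀ s ≤ max s₀ s := (min_le_left _ _).trans (le_max_left _ _)
    have hab : a ≤ b := by rw [hadef, hbdef]; linarith
    have ht₀ : s₀ ∈ Icc a b := by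
      rw [mem_Icc, hadef, hbdef]
      constructor
      · linarith [min_le_left s₀ s]
      · linarith [le_max_left s₀ s]
    obtain ⟨f, h1, _h2, h3⟩ := exists_sol_Icc B hab ht₀ (hB.mono hsub) y₀
    exact ⟨(a, b, f), show a < min s₀ s from by rw [hadef]; exact sub_lt_self _ hε,
      show max s₀ s < b from by rw [hbdef]; exact lt_add_of_pos_right _ hε,
      hsub, h1, h3⟩
  choose! p ha hb hsub hinit hode using hP
  set A : ℝ → ℝ := fun s => (p s).1 with hAdef
  set Bd : ℝ → ℝ := fun s => (p s).2.1 with hBddef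
  set f : ℝ → ℝ → E4 := fun s => (p s).2.2 with hfdef
  have hinit' : ∀ s ∈ I, f s s₀ = y₀ := hinit
  set y : ℝ → E4 := fun s => if hs : s ∈ I then f s s else y₀ with hydef
  have hmem : ∀ s ∈ I, s ∈ Ioo (A s) (Bd s) :=
    fun s hs => ⟨lt_of_lt_of_le (ha s hs) (min_le_right _ _),
      lt_of_le_of_lt (le_max_right _ _) (hb s hs)⟩
  have hmem₀ : ∀ s ∈ I, s₀ ∈ Ioo (A s) (Bd s) :=
    fun s hs => ⟨lt_of_lt_of_le (ha s hs) (min_le_left _ _),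
      lt_of_le_of_lt (le_max_left _ _) (hb s hs)⟩
  have hDA : ∀ s ∈ I, ∀ t ∈ Ioo (A s) (Bd s), HasDerivAt (f s) (B t (f s t)) t :=
    fun s hs t ht => (hode s hs t (Ioo_subset_Icc_self ht)).hasDerivAt
      (Icc_mem_nhds ht.1 ht.2)
  have hagree : ∀ s ∈ I, ∀ t ∈ I, t ∈ Ioo (A s) (Bd s) → f s t = f t t := by
    intro s hs t htI ht
    set α : ℝ := max (A s) (A t) with hα
    set β : ℝ := min (Bd s) (Bd t) with hβ
    have h₀ : s₀ ∈ Ioo α β :=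
      ⟨max_lt (hmem₀ s hs).1 (hmem₀ t htI).1, lt_min (hmem₀ s hs).2 (hmem₀ t htI).2⟩
    have hαβ : α ≤ β := le_of_lt (h₀.1.trans h₀.2)
    have hIoosub : Ioo α β ⊆ Ioo (A s) (Bd s) :=
      Ioo_subset_Ioo (le_max_left _ _) (min_le_left _ _)
    have hIoosub' : Ioo α β ⊆ Ioo (A t) (Bd t) :=
      Ioo_subset_Ioo (le_max_right _ _) (min_le_right _ _)
    have hαβI : Icc α β ⊆ I := fun u hu => hsub s hs
      ⟨le_trans (le_max_left _ _) hu.1, le_trans hu.2 (min_le_left _ _)⟩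
    obtain ⟨K₀, hK₀⟩ := isCompact_Icc.exists_bound_of_continuousOn (hB.mono hαβI)
    set K : ℝ := max K₀ 0 with hKdef
    have hK0 : 0 ≤ K := le_max_right _ _
    set cT : ℝ → ℝ := fun u => max α (min β u) with hcT
    have hcTmem : ∀ u : ℝ, cT u ∈ Icc α β := by
      intro u
      constructor
      · exact le_max_left _ _
      · exact max_le hαβ (min_le_left _ _)
    have hcTid : ∀ u ∈ Ioo α β, cT u = u := by
      intro u hu
      rw [hcT]
      dsimp only
      rw [min_eq_right (le_of_lt hu.2), max_eq_right (le_of_lt hu.1)]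
    set v : ℝ → E4 → E4 := fun u x => B (cT u) x with hv
    have hlips : ∀ u : ℝ, LipschitzOnWith K.toNNReal (v u) univ := by
      intro u
      intro x _ z _
      apply (B (cT u)).lipschitz.weaken _ x z
      rw [← NNReal.coe_le_coe, coe_nnnorm, Real.coe_toNNReal _ hK0]
      exact ((hK₀ _ (hcTmem u)).trans (le_max_left _ _))
    have hfs : ∀ u ∈ Ioo α β, HasDerivAt (f s) (v u (f s u)) u ∧ f s u ∈ univ := by
      intro u hu
      refine ⟨?_, trivial⟩
      rw [hv]; dsimp only; rw [hcTid u hu]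
      exact hDA s hs u (hIoosub hu)
    have hft : ∀ u ∈ Ioo α β, HasDerivAt (f t) (v u (f t u)) u ∧ f t u ∈ univ := by
      intro u hu
      refine ⟨?_, trivial⟩
      rw [hv]; dsimp only; rw [hcTid u hu]
      exact hDA t htI u (hIoosub' hu)
    have heq0 : f s s₀ = f t s₀ := by rw [hinit' s hs, hinit' t htI]
    have hEq := ODE_solution_unique_of_mem_Ioo (fun u _ => hlips u) h₀ hfs hft heq0
    exact hEq ⟨max_lt ht.1 (hmem t htI).1, lt_min ht.2 (hmem t htI).2⟩
  have hyI : ∀ s ∈ I, y s = f s s := by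
    intro s hs
    rw [hydef]
    exact dif_pos hs
  refine ⟨y, by rw [hyI s₀ hs₀, hinit' s₀ hs₀], fun s hs => ?_⟩
  have hloc : y =ᶠ[nhds s] f s := by
    have hUnhds : Ioo (A s) (Bd s) ∩ I ∈ nhds s :=
      Filter.inter_mem (Ioo_mem_nhds (hmem s hs).1 (hmem s hs).2) (hIopen.mem_nhds hs)
    filter_upwards [hUnhds] with t ht
    rw [hyI t ht.2]
    exact (hagree s hs t ht.2 ht.1).symm
  have hD := (hDA s hs s (hmem s hs)).congr_of_eventuallyEq hloc
  rw [hyI s hs]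
  exact hD


/-- Bootstrap: a solution of an ODE with smooth right-hand side is smooth. -/
lemma contDiffOn_of_ode {I : Set ℝ} (hIopen : IsOpen I) {y F : ℝ → E4}
    (hd : ∀ s ∈ I, HasDerivAt y (F s) s)
    (hF : ∀ n : ℕ, ContDiffOn ℝ n y I → ContDiffOn ℝ n F I) :
    ContDiffOn ℝ (⊤ : ℕ∞) y I := by
  have hall : ∀ n : ℕ, ContDiffOn ℝ n y I := by
    intro n
    induction n with
    | zero =>
      rw [show ((0 : ℕ) : WithTop ℕ∞) = 0 from rfl, contDiffOn_zero]
      exact fun s hs => (hd s hs).continuousAt.continuousWithinAt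
    | succ n ih =>
      have hdiff : DifferentiableOn ℝ y I :=
        fun s hs => (hd s hs).differentiableAt.differentiableWithinAt
      have hderiv : EqOn (deriv y) F I := fun s hs => (hd s hs).deriv
      rw [show ((n + 1 : ℕ) : WithTop ℕ∞) = (n : WithTop ℕ∞) + 1 by norm_cast]
      rw [contDiffOn_succ_iff_deriv_of_isOpen hIopen]
      refine ⟨hdiff, ?_, (hF n ih).congr hderiv⟩
      intro h
      exfalso
      exact (WithTop.coe_ne_top (a := (n : ℕ∞))) (by exact_mod_cast h)
  exact contDiffOn_infty.2 hall

/-- A function with vanishing derivative on an open order-connected set is constant. -/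
lemma const_on_of_deriv_zero {I : Set ℝ} (hIopen : IsOpen I) (hIconn : I.OrdConnected)
    {h : ℝ → ℝ} (hd : ∀ s ∈ I, HasDerivAt h 0 s) {x y : ℝ} (hx : x ∈ I) (hy : y ∈ I) :
    h x = h y := by
  have hconv : Convex ℝ I := convex_iff_ordConnected.2 hIconn
  apply hconv.is_const_of_fderivWithin_eq_zero (𝕜 := ℝ)
    (fun s hs => (hd s hs).differentiableAt.differentiableWithinAt) _ hx hy
  intro s hs
  rw [fderivWithin_of_isOpen hIopen hs]
  have h1 := (hd s hs).hasFDerivAt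
  have h2 : ((1 : ℝ →L[ℝ] ℝ).smulRight (0 : ℝ)) = 0 := by
    ext u
    simp
  rw [ContinuousLinearMap.toSpanSingleton_zero] at h1
  exact h1.fderiv

end BishopAux

namespace BishopAux

open scoped InnerProductSpace ContDiff

lemma gram_aux (v0 v1 v2 v3 : E4)
    (h00 : ⟪v0, v0⟫_ℝ = 1) (h01 : ⟪v0, v1⟫_ℝ = 0) (h02 : ⟪v0, v2⟫_ℝ = 0)
    (h03 : ⟪v0, v3⟫_ℝ = 0) (h11 : ⟪v1, v1⟫_ℝ = 1) (h12 : ⟪v1, v2⟫_ℝ = 0)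
    (h13 : ⟪v1, v3⟫_ℝ = 0) (h22 : ⟪v2, v2⟫_ℝ = 1) (h23 : ⟪v2, v3⟫_ℝ = 0)
    (h33 : ⟪v3, v3⟫_ℝ = 1) :
    ∀ i j : Fin 4, ⟪![v0, v1, v2, v3] i, ![v0, v1, v2, v3] j⟫_ℝ =
      if i = j then 1 else 0 := by
  have h10 : ⟪v1, v0⟫_ℝ = 0 := by rw [real_inner_comm]; exact h01
  have h20 : ⟪v2, v0⟫_ℝ = 0 := by rw [real_inner_comm]; exact h02
  have h30 : ⟪v3, v0⟫_ℝ = 0 := by rw [real_inner_comm]; exact h03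
  have h21 : ⟪v2, v1⟫_ℝ = 0 := by rw [real_inner_comm]; exact h12
  have h31 : ⟪v3, v1⟫_ℝ = 0 := by rw [real_inner_comm]; exact h13
  have h32 : ⟪v3, v2⟫_ℝ = 0 := by rw [real_inner_comm]; exact h23
  intro i j
  fin_cases i <;> fin_cases j <;> simp_all

lemma contDiffOn_coord {g : ℝ → E4} {I : Set ℝ} (hg : ContDiffOn ℝ (⊤ : ℕ∞) g I) (j : Fin 4) :
    ContDiffOn ℝ (⊤ : ℕ∞) (fun s => g s j) I :=
  (EuclideanSpace.proj (𝕜 := ℝ) j).contDiff.comp_contDiffOn hg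

lemma hasDerivAt_coord {g : ℝ → E4} {g' : E4} {s : ℝ} (h : HasDerivAt g g' s) (j : Fin 4) :
    HasDerivAt (fun t => g t j) (g' j) s := by
  have := (EuclideanSpace.proj (𝕜 := ℝ) j).hasFDerivAt.comp_hasDerivAt s h
  exact this

end BishopAux

section MainProof

open BishopAux Matrix
open scoped InnerProductSpace ContDiff

theorem hyperplane_curve_admits_typeC' (I : Set ℝ) (hIopen : IsOpen I)
    (hIinterval : I.OrdConnected) (γ : ℝ → E4)
    (hγs : ContDiffOn ℝ (⊤ : ℕ∞) γ I) (hγ1 : ∀ s ∈ I, ‖deriv γ s‖ = 1)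
    (n : E4) (hn : n ≠ 0) (c : ℝ) (hplane : ∀ s ∈ I, (inner ℝ (γ s) n : ℝ) = c)
    (s₀ : ℝ) (hs₀ : s₀ ∈ I) :
    ∃ Z X : ℝ → Matrix (Fin 4) (Fin 4) ℝ,
      ((∀ i j, ContDiffOn ℝ (⊤ : ℕ∞) (fun s => Z s i j) I) ∧
        (∀ s ∈ I, Z s ∈ Matrix.orthogonalGroup (Fin 4) ℝ) ∧
        ∀ s ∈ I, ∀ i, Z s 0 i = deriv γ s i) ∧
      (∀ s ∈ I, ∀ i j, deriv (fun t => Z t i j) s = (X s * Z s) i j) ∧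
      ∀ s ∈ I, X s 0 3 = 0 ∧ X s 1 2 = 0 ∧ X s 2 3 = 0 := by
  classical
  set T : ℝ → E4 := deriv γ with hTdef
  have hTs : ContDiffOn ℝ (⊤ : ℕ∞) T I := hγs.deriv_of_isOpen hIopen (by norm_num)
  set T' : ℝ → E4 := deriv T with hT'def
  have hT's : ContDiffOn ℝ (⊤ : ℕ∞) T' I := hTs.deriv_of_isOpen hIopen (by norm_num)
  have hγd : ∀ s ∈ I, HasDerivAt γ (T s) s := fun s hs =>
    ((hγs.differentiableOn (by norm_num) s hs).differentiableAt
      (hIopen.mem_nhds hs)).hasDerivAt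
  have hTd : ∀ s ∈ I, HasDerivAt T (T' s) s := fun s hs =>
    ((hTs.differentiableOn (by norm_num) s hs).differentiableAt
      (hIopen.mem_nhds hs)).hasDerivAt
  -- basic inner product facts
  have hTT : ∀ s ∈ I, ⟪T s, T s⟫_ℝ = 1 := by
    intro s hs
    rw [real_inner_self_eq_norm_sq, hγ1 s hs]
    norm_num
  have hTn : ∀ s ∈ I, ⟪T s, n⟫_ℝ = 0 := by
    intro s hs
    have h1 : HasDerivAt (fun t => ⟪γ t, n⟫_ℝ) (⟪γ s, (0:E4)⟫_ℝ + ⟪T s, n⟫_ℝ) s :=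
      (hγd s hs).inner ℝ (hasDerivAt_const s n)
    have h2 : (fun t => ⟪γ t, n⟫_ℝ) =ᶠ[nhds s] (fun _ => c) := by
      filter_upwards [hIopen.mem_nhds hs] with t ht
      exact hplane t ht
    have h3 : HasDerivAt (fun t => ⟪γ t, n⟫_ℝ) 0 s :=
      (hasDerivAt_const s c).congr_of_eventuallyEq h2
    have h4 := h1.unique h3
    simpa using h4
  have hT'n : ∀ s ∈ I, ⟪T' s, n⟫_ℝ = 0 := by
    intro s hs
    have h1 : HasDerivAt (fun t => ⟪T t, n⟫_ℝ) (⟪T s, (0:E4)⟫_ℝ + ⟪T' s, n⟫_ℝ) s :=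
      (hTd s hs).inner ℝ (hasDerivAt_const s n)
    have h2 : (fun t => ⟪T t, n⟫_ℝ) =ᶠ[nhds s] (fun _ => 0) := by
      filter_upwards [hIopen.mem_nhds hs] with t ht
      exact hTn t ht
    have h3 : HasDerivAt (fun t => ⟪T t, n⟫_ℝ) 0 s :=
      (hasDerivAt_const s (0:ℝ)).congr_of_eventuallyEq h2
    have h4 := h1.unique h3
    simpa using h4
  -- the unit normal of the hyperplane
  have hnn : ‖n‖ ≠ 0 := norm_ne_zero_iff.2 hn
  set e : E4 := ‖n‖⁻¹ • n with hedef
  have hee : ⟪e, e⟫_ℝ = 1 := by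
    rw [hedef, real_inner_smul_left, real_inner_smul_right, real_inner_self_eq_norm_sq]
    field_simp
  have hTe : ∀ s ∈ I, ⟪T s, e⟫_ℝ = 0 := by
    intro s hs
    rw [hedef, real_inner_smul_right, hTn s hs, mul_zero]
  have hT'e : ∀ s ∈ I, ⟪T' s, e⟫_ℝ = 0 := by
    intro s hs
    rw [hedef, real_inner_smul_right, hT'n s hs, mul_zero]
  -- initial orthonormal data
  set Kv : Submodule ℝ E4 := (Submodule.span ℝ (Set.range ![T s₀, e]))ᗮ with hKvdef
  have honv : Orthonormal ℝ ![T s₀, e] := by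
    rw [orthonormal_iff_ite]
    intro i j
    have hcomm : ⟪e, T s₀⟫_ℝ = 0 := by rw [real_inner_comm]; exact hTe s₀ hs₀
    fin_cases i <;> fin_cases j <;>
      simp [hTT s₀ hs₀, hTe s₀ hs₀, hee, hcomm, hγ1 s₀ hs₀,
        (show ‖e‖ = 1 by rw [hedef, norm_smul, norm_inv, norm_norm]; exact inv_mul_cancel₀ hnn)]
  have hdim2 : Module.finrank ℝ Kv = 2 := by
    have h1 : Module.finrank ℝ (Submodule.span ℝ (Set.range ![T s₀, e])) = 2 := by
      rw [finrank_span_eq_card honv.linearIndependent]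
      simp
    have h2 := Submodule.finrank_add_finrank_orthogonal
      (K := Submodule.span ℝ (Set.range ![T s₀, e]))
    rw [h1, finrank_euclideanSpace_fin] at h2
    rw [hKvdef]
    omega
  set obB : OrthonormalBasis (Fin 2) ℝ Kv :=
    (stdOrthonormalBasis ℝ Kv).reindex (finCongr hdim2) with hobB
  set W₁ : E4 := (obB 0 : E4) with hW₁def
  set W₂ : E4 := (obB 1 : E4) with hW₂def
  have hWmem : ∀ i : Fin 2, (obB i : E4) ∈ Kv := fun i => (obB i).2
  have hWT : ∀ i : Fin 2, ⟪T s₀, (obB i : E4)⟫_ℝ = 0 := by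
    intro i
    have := (Submodule.mem_orthogonal _ _).1 (hWmem i) (T s₀)
      (Submodule.subset_span ⟨0, rfl⟩)
    exact this
  have hWe : ∀ i : Fin 2, ⟪e, (obB i : E4)⟫_ℝ = 0 := by
    intro i
    exact (Submodule.mem_orthogonal _ _).1 (hWmem i) e (Submodule.subset_span ⟨1, rfl⟩)
  have hWn : ∀ i : Fin 2, ⟪(obB i : E4), n⟫_ℝ = 0 := by
    intro i
    have h1 := hWe i
    rw [hedef, real_inner_smul_left] at h1
    rcases mul_eq_zero.1 h1 with h | h
    · exact absurd h (inv_ne_zero hnn)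
    · rw [real_inner_comm]; exact h
  have hWW : ∀ i j : Fin 2, ⟪(obB i : E4), (obB j : E4)⟫_ℝ = if i = j then 1 else 0 := by
    intro i j
    have h1 := orthonormal_iff_ite.1 obB.orthonormal i j
    rw [Submodule.coe_inner] at h1
    exact_mod_cast h1
  -- the coefficient map for the parallel-transport ODE
  set Bc : ℝ → E4 →L[ℝ] E4 := fun s => (innerSL ℝ (T' s)).smulRight (-(T s)) with hBcdef
  have hBapp : ∀ (s : ℝ) (x : E4), Bc s x = -(⟪x, T' s⟫_ℝ) • T s := by
    intro s x
    rw [hBcdef]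
    simp only [ContinuousLinearMap.smulRight_apply, innerSL_apply_apply]
    rw [real_inner_comm, smul_neg, neg_smul]
  have hBcont : ContinuousOn Bc I := by
    have h1 : ContinuousOn (fun s => innerSL ℝ (T' s)) I :=
      (innerSL ℝ).continuous.comp_continuousOn hT's.continuousOn
    have h3 : ContinuousOn
        (fun s => ContinuousLinearMap.smulRightL ℝ E4 E4 (innerSL ℝ (T' s))) I :=
      (ContinuousLinearMap.smulRightL ℝ E4 E4).continuous.comp_continuousOn h1
    have h4 := h3.clm_apply (hTs.continuousOn.neg)
    exact h4
  -- solve the ODE for both normal vectors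
  obtain ⟨Y₁, hY₁init, hY₁d⟩ := exists_sol_global I hIopen hIinterval hs₀ Bc hBcont W₁
  obtain ⟨Y₂, hY₂init, hY₂d⟩ := exists_sol_global I hIopen hIinterval hs₀ Bc hBcont W₂
  have hY₁d' : ∀ s ∈ I, HasDerivAt Y₁ (-(⟪Y₁ s, T' s⟫_ℝ) • T s) s := by
    intro s hs
    have := hY₁d s hs
    rwa [hBapp] at this
  have hY₂d' : ∀ s ∈ I, HasDerivAt Y₂ (-(⟪Y₂ s, T' s⟫_ℝ) • T s) s := by
    intro s hs
    have := hY₂d s hs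
    rwa [hBapp] at this
  -- smoothness of the solutions
  have hsmooth : ∀ Y : ℝ → E4, (∀ s ∈ I, HasDerivAt Y (-(⟪Y s, T' s⟫_ℝ) • T s) s) →
      ContDiffOn ℝ (⊤ : ℕ∞) Y I := by
    intro Y hYd
    apply contDiffOn_of_ode hIopen hYd
    intro m hm
    have h1 : ContDiffOn ℝ m (fun s => -(⟪Y s, T' s⟫_ℝ)) I :=
      (hm.inner ℝ (hT's.of_le (by exact_mod_cast le_top))).neg
    exact h1.smul (hTs.of_le (by exact_mod_cast le_top))
  have hY₁s := hsmooth Y₁ hY₁d'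
  have hY₂s := hsmooth Y₂ hY₂d'
  -- constancy of inner products
  have hconst : ∀ (h : ℝ → ℝ), (∀ s ∈ I, HasDerivAt h 0 s) → ∀ s ∈ I, h s = h s₀ :=
    fun h hd s hs => const_on_of_deriv_zero hIopen hIinterval hd hs hs₀
  have hY₁T : ∀ s ∈ I, ⟪Y₁ s, T s⟫_ℝ = 0 := by
    intro s hs
    have hd : ∀ u ∈ I, HasDerivAt (fun t => ⟪Y₁ t, T t⟫_ℝ) 0 u := by
      intro u hu
      have h1 := (hY₁d' u hu).inner ℝ (hTd u hu)
      have h2 : ⟪Y₁ u, T' u⟫_ℝ + ⟪-(⟪Y₁ u, T' u⟫_ℝ) • T u, T u⟫_ℝ = 0 := by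
        rw [real_inner_smul_left, hTT u hu]
        ring
      rwa [h2] at h1
    have := hconst _ hd s hs
    rw [this, hY₁init]
    rw [real_inner_comm]
    exact hWT 0
  have hY₂T : ∀ s ∈ I, ⟪Y₂ s, T s⟫_ℝ = 0 := by
    intro s hs
    have hd : ∀ u ∈ I, HasDerivAt (fun t => ⟪Y₂ t, T t⟫_ℝ) 0 u := by
      intro u hu
      have h1 := (hY₂d' u hu).inner ℝ (hTd u hu)
      have h2 : ⟪Y₂ u, T' u⟫_ℝ + ⟪-(⟪Y₂ u, T' u⟫_ℝ) • T u, T u⟫_ℝ = 0 := by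
        rw [real_inner_smul_left, hTT u hu]
        ring
      rwa [h2] at h1
    have := hconst _ hd s hs
    rw [this, hY₂init]
    rw [real_inner_comm]
    exact hWT 1
  have hY₁n : ∀ s ∈ I, ⟪Y₁ s, n⟫_ℝ = 0 := by
    intro s hs
    have hd : ∀ u ∈ I, HasDerivAt (fun t => ⟪Y₁ t, n⟫_ℝ) 0 u := by
      intro u hu
      have h1 := (hY₁d' u hu).inner ℝ (hasDerivAt_const u n)
      have h2 : ⟪Y₁ u, (0:E4)⟫_ℝ + ⟪-(⟪Y₁ u, T' u⟫_ℝ) • T u, n⟫_ℝ = 0 := by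
        rw [real_inner_smul_left, hTn u hu, inner_zero_right]
        ring
      rwa [h2] at h1
    have := hconst _ hd s hs
    rw [this, hY₁init]
    exact hWn 0
  have hY₂n : ∀ s ∈ I, ⟪Y₂ s, n⟫_ℝ = 0 := by
    intro s hs
    have hd : ∀ u ∈ I, HasDerivAt (fun t => ⟪Y₂ t, n⟫_ℝ) 0 u := by
      intro u hu
      have h1 := (hY₂d' u hu).inner ℝ (hasDerivAt_const u n)
      have h2 : ⟪Y₂ u, (0:E4)⟫_ℝ + ⟪-(⟪Y₂ u, T' u⟫_ℝ) • T u, n⟫_ℝ = 0 := by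
        rw [real_inner_smul_left, hTn u hu, inner_zero_right]
        ring
      rwa [h2] at h1
    have := hconst _ hd s hs
    rw [this, hY₂init]
    exact hWn 1
  have hY₁e : ∀ s ∈ I, ⟪Y₁ s, e⟫_ℝ = 0 := by
    intro s hs
    rw [hedef, real_inner_smul_right, hY₁n s hs, mul_zero]
  have hY₂e : ∀ s ∈ I, ⟪Y₂ s, e⟫_ℝ = 0 := by
    intro s hs
    rw [hedef, real_inner_smul_right, hY₂n s hs, mul_zero]
  have hY₁₂ : ∀ s ∈ I, ⟪Y₁ s, Y₂ s⟫_ℝ = 0 := by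
    intro s hs
    have hd : ∀ u ∈ I, HasDerivAt (fun t => ⟪Y₁ t, Y₂ t⟫_ℝ) 0 u := by
      intro u hu
      have h1 := (hY₁d' u hu).inner ℝ (hY₂d' u hu)
      have h2 : ⟪Y₁ u, -(⟪Y₂ u, T' u⟫_ℝ) • T u⟫_ℝ +
          ⟪-(⟪Y₁ u, T' u⟫_ℝ) • T u, Y₂ u⟫_ℝ = 0 := by
        simp only [real_inner_smul_left, real_inner_smul_right]
        rw [hY₁T u hu, real_inner_comm (Y₂ u) (T u), hY₂T u hu]
        ring
      rwa [h2] at h1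
    have := hconst _ hd s hs
    rw [this, hY₁init, hY₂init]
    exact hWW 0 1
  have hY₁₁ : ∀ s ∈ I, ⟪Y₁ s, Y₁ s⟫_ℝ = 1 := by
    intro s hs
    have hd : ∀ u ∈ I, HasDerivAt (fun t => ⟪Y₁ t, Y₁ t⟫_ℝ) 0 u := by
      intro u hu
      have h1 := (hY₁d' u hu).inner ℝ (hY₁d' u hu)
      have h2 : ⟪Y₁ u, -(⟪Y₁ u, T' u⟫_ℝ) • T u⟫_ℝ +
          ⟪-(⟪Y₁ u, T' u⟫_ℝ) • T u, Y₁ u⟫_ℝ = 0 := by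
        simp only [real_inner_smul_left, real_inner_smul_right]
        rw [hY₁T u hu, real_inner_comm (Y₁ u) (T u), hY₁T u hu]
        ring
      rwa [h2] at h1
    have := hconst _ hd s hs
    rw [this, hY₁init]
    have := hWW 0 0
    simpa using this
  have hY₂₂ : ∀ s ∈ I, ⟪Y₂ s, Y₂ s⟫_ℝ = 1 := by
    intro s hs
    have hd : ∀ u ∈ I, HasDerivAt (fun t => ⟪Y₂ t, Y₂ t⟫_ℝ) 0 u := by
      intro u hu
      have h1 := (hY₂d' u hu).inner ℝ (hY₂d' u hu)
      have h2 : ⟪Y₂ u, -(⟪Y₂ u, T' u⟫_ℝ) • T u⟫_ℝ +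
          ⟪-(⟪Y₂ u, T' u⟫_ℝ) • T u, Y₂ u⟫_ℝ = 0 := by
        simp only [real_inner_smul_left, real_inner_smul_right]
        rw [hY₂T u hu, real_inner_comm (Y₂ u) (T u), hY₂T u hu]
        ring
      rwa [h2] at h1
    have := hconst _ hd s hs
    rw [this, hY₂init]
    have := hWW 1 1
    simpa using this
  -- the frame
  set Rw : ℝ → Fin 4 → E4 := fun s => ![T s, Y₁ s, Y₂ s, e] with hRwdef
  set Rw' : ℝ → Fin 4 → E4 :=
    fun s => ![T' s, -(⟪Y₁ s, T' s⟫_ℝ) • T s, -(⟪Y₂ s, T' s⟫_ℝ) • T s, (0:E4)] with hRw'def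
  set Z : ℝ → Matrix (Fin 4) (Fin 4) ℝ := fun s => Matrix.of (fun i j => Rw s i j) with hZdef
  set Zd : ℝ → Matrix (Fin 4) (Fin 4) ℝ :=
    fun s => Matrix.of (fun i j => Rw' s i j) with hZddef
  set X : ℝ → Matrix (Fin 4) (Fin 4) ℝ := fun s => Zd s * (Z s)ᵀ with hXdef
  -- Gram identities
  have hGram : ∀ s ∈ I, ∀ i j : Fin 4, ⟪Rw s i, Rw s j⟫_ℝ = if i = j then 1 else 0 := by
    intro s hs
    apply gram_aux
    · exact hTT s hs
    · rw [real_inner_comm]; exact hY₁T s hs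
    · rw [real_inner_comm]; exact hY₂T s hs
    · exact hTe s hs
    · exact hY₁₁ s hs
    · exact hY₁₂ s hs
    · exact hY₁e s hs
    · exact hY₂₂ s hs
    · exact hY₂e s hs
    · exact hee
  -- matrix orthogonality
  have hmul : ∀ s, ∀ i j : Fin 4, (Z s * (Z s)ᵀ) i j = ⟪Rw s i, Rw s j⟫_ℝ := by
    intro s i j
    rw [Matrix.mul_apply, PiLp.inner_apply]
    apply Finset.sum_congr rfl
    intro k _
    rw [Matrix.transpose_apply]
    simp [hZdef, RCLike.inner_apply]
    ring
  have hZZt : ∀ s ∈ I, Z s * (Z s)ᵀ = 1 := by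
    intro s hs
    ext i j
    rw [hmul s i j, hGram s hs i j, Matrix.one_apply]
  have hZtZ : ∀ s ∈ I, (Z s)ᵀ * Z s = 1 := fun s hs => mul_eq_one_comm.1 (hZZt s hs)
  have hstar : ∀ s, star (Z s) = (Z s)ᵀ := by
    intro s
    ext i j
    simp [Matrix.star_apply]
  have hZortho : ∀ s ∈ I, Z s ∈ Matrix.orthogonalGroup (Fin 4) ℝ := by
    intro s hs
    rw [Matrix.mem_orthogonalGroup_iff]
    exact hZZt s hs
  -- entrywise derivatives
  have hZdrv : ∀ s ∈ I, ∀ i j : Fin 4, HasDerivAt (fun t => Z t i j) (Zd s i j) s := by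
    intro s hs i j
    have h0 : HasDerivAt (fun t => Rw t 0 j) (Rw' s 0 j) s := by
      simp only [hRwdef, hRw'def, Matrix.cons_val_zero]
      exact hasDerivAt_coord (hTd s hs) j
    have h1 : HasDerivAt (fun t => Rw t 1 j) (Rw' s 1 j) s := by
      simp only [hRwdef, hRw'def, Matrix.cons_val_one, Matrix.head_cons]
      exact hasDerivAt_coord (hY₁d' s hs) j
    have h2 : HasDerivAt (fun t => Rw t 2 j) (Rw' s 2 j) s := by
      simp only [hRwdef, hRw'def, Matrix.cons_val_two, Matrix.tail_cons]
      exact hasDerivAt_coord (hY₂d' s hs) j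
    have h3 : HasDerivAt (fun t => Rw t 3 j) (Rw' s 3 j) s := by
      show HasDerivAt (fun _ => e j) ((0 : E4) j) s
      have h30 : ((0 : E4)) j = 0 := rfl
      rw [h30]
      exact hasDerivAt_const s (e j)
    fin_cases i
    · exact h0
    · exact h1
    · exact h2
    · exact h3
  -- assemble
  refine ⟨Z, X, ⟨?_, hZortho, ?_⟩, ?_, ?_⟩
  · -- smoothness of entries
    intro i j
    have h0 : ContDiffOn ℝ (⊤ : ℕ∞) (fun s => Rw s 0 j) I := by
      simp only [hRwdef, Matrix.cons_val_zero]
      exact contDiffOn_coord hTs j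
    have h1 : ContDiffOn ℝ (⊤ : ℕ∞) (fun s => Rw s 1 j) I := by
      simp only [hRwdef, Matrix.cons_val_one, Matrix.head_cons]
      exact contDiffOn_coord hY₁s j
    have h2 : ContDiffOn ℝ (⊤ : ℕ∞) (fun s => Rw s 2 j) I := by
      simp only [hRwdef, Matrix.cons_val_two, Matrix.tail_cons]
      exact contDiffOn_coord hY₂s j
    have h3 : ContDiffOn ℝ (⊤ : ℕ∞) (fun s => Rw s 3 j) I := by
      simp only [hRwdef, Matrix.cons_val_three, Matrix.tail_cons]
      exact contDiffOn_const
    fin_cases i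
    · exact h0
    · exact h1
    · exact h2
    · exact h3
  · -- first row is the tangent
    intro s hs i
    rfl
  · -- the derivative equation
    intro s hs i j
    rw [(hZdrv s hs i j).deriv, hXdef]
    have : Zd s * (Z s)ᵀ * Z s = Zd s := by
      rw [Matrix.mul_assoc, hZtZ s hs, Matrix.mul_one]
    rw [this]
  · -- shape C
    intro s hs
    have hentry : ∀ i j : Fin 4, X s i j = ⟪Rw' s i, Rw s j⟫_ℝ := by
      intro i j
      rw [hXdef]
      dsimp only
      rw [Matrix.mul_apply, PiLp.inner_apply]
      apply Finset.sum_congr rfl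
      intro k _
      rw [Matrix.transpose_apply]
      simp [hZdef, hZddef, RCLike.inner_apply]
      ring
    refine ⟨?_, ?_, ?_⟩
    · rw [hentry 0 3]
      exact hT'e s hs
    · rw [hentry 1 2]
      show ⟪-(⟪Y₁ s, T' s⟫_ℝ) • T s, Y₂ s⟫_ℝ = 0
      rw [real_inner_smul_left, real_inner_comm (Y₂ s) (T s), hY₂T s hs, mul_zero]
    · rw [hentry 2 3]
      show ⟪-(⟪Y₂ s, T' s⟫_ℝ) • T s, e⟫_ℝ = 0
      rw [real_inner_smul_left, hTe s hs, mul_zero]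

end MainProof


/-- A regular curve whose image lies in an affine hyperplane of ℝ⁴ admits a generalized
Bishop frame of type C. -/
theorem hyperplane_curve_admits_typeC (I : Set ℝ) (hIopen : IsOpen I)
    (hIinterval : I.OrdConnected) (γ : ℝ → E4) (hγ : IsRegularCurve I γ)
    (n : E4) (hn : n ≠ 0) (c : ℝ) (hplane : ∀ s ∈ I, (inner ℝ (γ s) n : ℝ) = c) :
    AdmitsFrame ShapeC I γ := by
  classical
  rcases I.eq_empty_or_nonempty with hI | ⟨s₀, hs₀⟩
  · subst hI
    exact ⟨fun _ => 1, fun _ => 1,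
      ⟨fun i j => contDiffOn_const, fun s hs => absurd hs (Set.notMem_empty s),
        fun s hs => absurd hs (Set.notMem_empty s)⟩,
      fun s hs => absurd hs (Set.notMem_empty s),
      fun s hs => absurd hs (Set.notMem_empty s)⟩
  · obtain ⟨Z, X, h1, h2, h3⟩ := hyperplane_curve_admits_typeC' I hIopen hIinterval γ
      hγ.1 hγ.2 n hn c hplane s₀ hs₀
    exact ⟨Z, X, ⟨h1.1, h1.2.1, h1.2.2⟩, h2, h3⟩
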